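/- arXiv:math-ph/0501013 — 5 statements merged into one kernel-verified Lean document; each statement's English description precedes it below -/
import Mathlib

section
/- Let ε̂ : ℤ³ → ℝ be absolutely summable with ε̂(−s) = ε̂(s) for all s and ε̂(s) ≤ 0 for all s ≠ 0, and define ε : ℝ³ → ℝ by ε(p) = Σ_{s∈ℤ³} ε̂(s)·cos⟨p,s⟩. Assume ε has a unique minimum at the origin, i.e. ε(p) > ε(0) for every p ∈ ℝ³ \ (2πℤ)³. Then for every q ∈ ℝ³ \ (2πℤ)³ the strict inequality ε(p) + ε(q) > (ε(p+q) + ε(p−q))/2 + ε(0) holds for Lebesgue-almost every p ∈ ℝ³. -/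
open MeasureTheory Real

/-!
Expanding the cosines, `ε(p) + ε(q) - (ε(p+q) + ε(p-q))/2 - ε(0)` is the series
`∑ₛ (-ε̂(s)) (1 - cos⟨q,s⟩) (1 - cos⟨p,s⟩)`, whose terms are nonnegative (the term `s = 0`
vanishes). Since `ε(q) - ε(0) = ∑ₛ (-ε̂(s)) (1 - cos⟨q,s⟩) > 0`, some `s₀` has
`-ε̂(s₀) (1 - cos⟨q,s₀⟩) > 0`, and then `s₀ ≠ 0`. The set of `p` with `cos⟨p,s₀⟩ = 1` is a
countable union of parallel hyperplanes, hence Lebesgue-null, and off it the `s₀`-term of the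
series is positive.
-/

section LevelSets

variable {E : Type*} [NormedAddCommGroup E] [NormedSpace ℝ E] [MeasurableSpace E] [BorelSpace E]
  [FiniteDimensional ℝ E] (μ : Measure E) [μ.IsAddHaarMeasure] {L : E →ₗ[ℝ] ℝ}

theorem addHaar_preimage_singleton_of_ne_zero (hL : L ≠ 0) (c : ℝ) : μ (L ⁻¹' {c}) = 0 := by
  rcases (L ⁻¹' {c}).eq_empty_or_nonempty with h | ⟨x₀, hx₀⟩
  · rw [h, measure_empty]
  have htranslate : L ⁻¹' {c} = (· + -x₀) ⁻¹' (LinearMap.ker L : Set E) := by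
    ext x
    rw [Set.mem_preimage, Set.mem_singleton_iff] at hx₀
    simp [hx₀, add_neg_eq_zero]
  rw [htranslate, measure_preimage_add_right]
  exact Measure.addHaar_submodule μ _ (LinearMap.ker_eq_top.not.2 hL)

theorem addHaar_preimage_of_countable (hL : L ≠ 0) {C : Set ℝ} (hC : C.Countable) :
    μ (L ⁻¹' C) = 0 := by
  rw [← Set.biUnion_of_singleton C, Set.preimage_iUnion₂]
  exact (measure_biUnion_null_iff hC).2 fun c _ ↦ addHaar_preimage_singleton_of_ne_zero μ hL c

theorem ae_cos_ne_one_of_ne_zero (hL : L ≠ 0) : ∀ᵐ x ∂μ, cos (L x) ≠ 1 := by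
  refine measure_mono_null (fun x hx ↦ ?_)
    (addHaar_preimage_of_countable μ hL (Set.countable_range fun n : ℤ ↦ n * (2 * π)))
  simpa [cos_eq_one_iff] using hx

end LevelSets

theorem Summable.mul_cos {S : Type*} {a : S → ℝ} (ha : Summable fun s ↦ |a s|) (f : S → ℝ) :
    Summable fun s ↦ a s * cos (f s) :=
  ha.of_norm_bounded fun s ↦ by
    simpa [abs_mul] using mul_le_of_le_one_right (abs_nonneg (a s)) (abs_cos_le_one (f s))

section Dispersion

variable {ι : Type*} [Fintype ι]

noncomputable def phase (s : ι → ℤ) : (ι → ℝ) →ₗ[ℝ] ℝ where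
  toFun p := ∑ i, p i * s i
  map_add' p q := by simp only [Pi.add_apply, add_mul, Finset.sum_add_distrib]
  map_smul' c p := by
    simp only [Pi.smul_apply, smul_eq_mul, mul_assoc, Finset.mul_sum, RingHom.id_apply]

@[simp]
theorem phase_apply (s : ι → ℤ) (p : ι → ℝ) : phase s p = ∑ i, p i * s i := rfl

noncomputable def dispersion (εhat : (ι → ℤ) → ℝ) (p : ι → ℝ) : ℝ :=
  ∑' s, εhat s * cos (phase s p)

variable {εhat : (ι → ℤ) → ℝ}

theorem neg_mul_one_sub_cos_phase_nonneg (hneg : ∀ s, s ≠ 0 → εhat s ≤ 0) (s : ι → ℤ)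
    (p : ι → ℝ) : 0 ≤ -εhat s * (1 - cos (phase s p)) := by
  rcases eq_or_ne s 0 with rfl | hs
  · simp
  · exact mul_nonneg (neg_nonneg.2 (hneg s hs)) (sub_nonneg.2 (cos_le_one _))

variable (hsum : Summable fun s ↦ |εhat s|)
include hsum

theorem hasSum_dispersion (p : ι → ℝ) :
    HasSum (fun s ↦ εhat s * cos (phase s p)) (dispersion εhat p) :=
  (hsum.mul_cos _).hasSum

theorem hasSum_dispersion_sub_dispersion_zero (q : ι → ℝ) :
    HasSum (fun s ↦ -εhat s * (1 - cos (phase s q))) (dispersion εhat q - dispersion εhat 0) := by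
  have hterm (s : ι → ℤ) : εhat s * cos (phase s q) - εhat s * cos (phase s 0) =
      -εhat s * (1 - cos (phase s q)) := by
    rw [map_zero, cos_zero]
    ring
  simpa only [hterm] using (hasSum_dispersion hsum q).sub (hasSum_dispersion hsum 0)

theorem hasSum_dispersion_second_difference (p q : ι → ℝ) :
    HasSum (fun s ↦ -εhat s * (1 - cos (phase s q)) * (1 - cos (phase s p)))
      (dispersion εhat p + dispersion εhat q -
        ((dispersion εhat (p + q) + dispersion εhat (p - q)) / 2 + dispersion εhat 0)) := by
  have hterm (s : ι → ℤ) :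
      εhat s * cos (phase s p) + εhat s * cos (phase s q) -
        ((εhat s * cos (phase s (p + q)) + εhat s * cos (phase s (p - q))) / 2 +
          εhat s * cos (phase s 0)) =
      -εhat s * (1 - cos (phase s q)) * (1 - cos (phase s p)) := by
    rw [map_add, map_sub, map_zero, cos_add, cos_sub, cos_zero]
    ring
  have h := hasSum_dispersion hsum
  simpa only [hterm] using
    ((h p).add (h q)).sub ((((h (p + q)).add (h (p - q))).div_const 2).add (h 0))

theorem exists_pos_of_dispersion_zero_lt {q : ι → ℝ}
    (hq : dispersion εhat 0 < dispersion εhat q) :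
    ∃ s, 0 < -εhat s * (1 - cos (phase s q)) := by
  by_contra! h
  have := hasSum_le h (hasSum_dispersion_sub_dispersion_zero hsum q) hasSum_zero
  linarith

end Dispersion

theorem threshold_dispersion_strict_inequality_general
    (εhat : (Fin 3 → ℤ) → ℝ)
    (hsum : Summable fun s => |εhat s|)
    (hneg : ∀ s, s ≠ 0 → εhat s ≤ 0)
    (ε : (Fin 3 → ℝ) → ℝ)
    (hε : ∀ p, ε p = ∑' s : Fin 3 → ℤ, εhat s * Real.cos (∑ i, p i * (s i : ℝ)))
    (hmin : ∀ p : Fin 3 → ℝ, ¬ (∀ i, ∃ n : ℤ, p i = 2 * π * n) → ε 0 < ε p)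
    (q : Fin 3 → ℝ) (hq : ¬ (∀ i, ∃ n : ℤ, q i = 2 * π * n)) :
    ∀ᵐ p : Fin 3 → ℝ ∂volume,
      ε p + ε q > (ε (p + q) + ε (p - q)) / 2 + ε 0 := by
  obtain rfl : ε = dispersion εhat := funext hε
  obtain ⟨s₀, hs₀⟩ := exists_pos_of_dispersion_zero_lt hsum (hmin q hq)
  have hphase : phase s₀ ≠ 0 := fun h ↦ by simp [h] at hs₀
  filter_upwards [ae_cos_ne_one_of_ne_zero volume hphase] with p hp
  have hterm : 0 < -εhat s₀ * (1 - cos (phase s₀ q)) * (1 - cos (phase s₀ p)) :=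
    mul_pos hs₀ (sub_pos.2 ((cos_le_one _).lt_of_ne hp))
  have hterms : ∀ s, 0 ≤ -εhat s * (1 - cos (phase s q)) * (1 - cos (phase s p)) := fun s ↦
    mul_nonneg (neg_mul_one_sub_cos_phase_nonneg hneg s q) (sub_nonneg.2 (cos_le_one _))
  have := hasSum_lt hterms hterm hasSum_zero (hasSum_dispersion_second_difference hsum p q)
  linarith

/-- strict inequality for Lévy–Khinchin type dispersion relations. -/
theorem threshold_dispersion_strict_inequality
    (εhat : (Fin 3 → ℤ) → ℝ)
    (hsum : Summable fun s => |εhat s|)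
    (hsymm : ∀ s, εhat (-s) = εhat s)
    (hneg : ∀ s, s ≠ 0 → εhat s ≤ 0)
    (ε : (Fin 3 → ℝ) → ℝ)
    (hε : ∀ p, ε p = ∑' s : Fin 3 → ℤ, εhat s * Real.cos (∑ i, p i * (s i : ℝ)))
    (hmin : ∀ p : Fin 3 → ℝ, ¬ (∀ i, ∃ n : ℤ, p i = 2 * π * n) → ε 0 < ε p)
    (q : Fin 3 → ℝ) (hq : ¬ (∀ i, ∃ n : ℤ, q i = 2 * π * n)) :
    ∀ᵐ p : Fin 3 → ℝ ∂volume,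
      ε p + ε q > (ε (p + q) + ε (p - q)) / 2 + ε 0 :=
  threshold_dispersion_strict_inequality_general εhat hsum hneg ε hε hmin q hq
end

section
/- Let ε : ℝ³ → ℝ be a bounded even function (ε(−p) = ε(p)) that is conditionally negative definite, i.e. for every n ∈ ℕ, all points p₁, …, pₙ ∈ ℝ³ and all complex numbers z₁, …, zₙ with z₁ + ⋯ + zₙ = 0 one has Σ_{i,j=1}^{n} ε(p_i − p_j)·z_i·conj(z_j) ≤ 0. Then for all p, q ∈ ℝ³ the inequality ε(p) + ε(q) ≥ (ε(p+q) + ε(p−q))/2 + ε(0) holds. -/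
open scoped ComplexOrder

/-- the non-strict inequality for bounded even conditionally
negative definite functions. -/
theorem cnd_inequality
    (ε : (Fin 3 → ℝ) → ℝ)
    (hbdd : ∃ C : ℝ, ∀ p, |ε p| ≤ C)
    (heven : ∀ p, ε (-p) = ε p)
    (hcnd : ∀ (n : ℕ) (p : Fin n → (Fin 3 → ℝ)) (z : Fin n → ℂ),
      (∑ i, z i) = 0 →
      (∑ i, ∑ j, (ε (p i - p j) : ℂ) * z i * (starRingEnd ℂ) (z j)) ≤ 0)
    (p q : Fin 3 → ℝ) :
    ε p + ε q ≥ (ε (p + q) + ε (p - q)) / 2 + ε 0 := by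
  have h := hcnd 4 ![0, p, q, p + q] ![1, -1, -1, 1] (by
    simp [Fin.sum_univ_four])
  simp only [Fin.sum_univ_four, Matrix.cons_val_zero, Matrix.cons_val_one,
    Matrix.head_cons, Matrix.cons_val_two, Matrix.tail_cons, Matrix.cons_val_three,
    map_one, map_neg, mul_one, mul_neg, neg_neg, one_mul, neg_one_mul] at h
  have e1 : (0 : Fin 3 → ℝ) - p = -p := by abel
  have e2 : (0 : Fin 3 → ℝ) - q = -q := by abel
  have e3 : (0 : Fin 3 → ℝ) - (p + q) = -(p + q) := by abel
  have e4 : p - 0 = p := by abel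
  have e5 : q - 0 = q := by abel
  have e6 : p + q - 0 = p + q := by abel
  have e7 : p - (p + q) = -q := by abel
  have e8 : q - (p + q) = -p := by abel
  have e9 : p + q - p = q := by abel
  have e10 : p + q - q = p := by abel
  have e11 : q - p = -(p - q) := by abel
  have e12 : (p : Fin 3 → ℝ) - p = 0 := by abel
  have e13 : (q : Fin 3 → ℝ) - q = 0 := by abel
  have e14 : (p + q) - (p + q) = (0 : Fin 3 → ℝ) := by abel
  have e15 : (0 : Fin 3 → ℝ) - 0 = 0 := by abel
  rw [e1, e2, e3, e4, e5, e6, e7, e8, e9, e10, e11, e12, e13, e14, e15,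
    heven, heven, heven, heven] at h
  have h' : (((4 * ε 0 - 4 * ε p - 4 * ε q + 2 * ε (p + q) + 2 * ε (p - q) : ℝ)) : ℂ) ≤ 0 := by
    push_cast
    convert h using 1
    ring
  have h'' : (4 * ε 0 - 4 * ε p - 4 * ε q + 2 * ε (p + q) + 2 * ε (p - q) : ℝ) ≤ 0 := by
    exact_mod_cast h'
  linarith
end

section
/- Assume ε : ℝ³ → ℝ is 2π-periodic in each coordinate, twice continuously differentiable, satisfies ε(p) > ε(0) for all p ∈ ℝ³ \ (2πℤ)³, and has positive definite Hessian at 0. Let v : ℝ³ → ℂ be continuous and 2π-periodic in each coordinate, and let λ ≤ ε(0). Then the formula (G(λ)f)(p) = (2π)^{−3/2} ∫_{[−π,π]³} v(p−q)·(ε(q) − λ)^{−1}·f(q) dq defines a bounded linear operator on the Banach space of continuous functions ℝ³ → ℂ that are 2π-periodic in each coordinate (with the supremum norm), and this operator is compact. -/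
/-!
Near its minimum `ε q - ε 0 ≥ c ‖q‖²`: along each short ray the second derivative of `ε` stays
above half the minimum of the Hessian form at `0` on the unit sphere. Since `‖q‖⁻²` is integrable near the origin
in dimension three, and `ε - λ` is continuous and positive on the rest of the cube, the weight
`(ε q - λ)⁻¹` is integrable. Its pushforward to the torus is then a finite measure `ν`, and
`G(λ)` is the integral operator against `ν` with the continuous kernel `v(x - y)`. Such an
operator is compact by Arzelà–Ascoli: the image of the unit ball is bounded by `‖v‖ ν(𝕋³)` and
equicontinuous, since `x ↦ (f ↦ ∫ v(x - y) f y dν)` is continuous into the dual of `C(𝕋³)`.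
-/

open MeasureTheory Real

noncomputable section

/-- The cube `[-π,π]³` in `ℝ³`, a fundamental domain for the torus `𝕋³`. -/
def cube3 : Set (Fin 3 → ℝ) := Set.Icc (fun _ => -π) (fun _ => π)

instance : Fact (0 < 2 * π) := ⟨by positivity⟩

/-- The three-dimensional torus `𝕋³`. -/
abbrev Torus3 := Fin 3 → AddCircle (2 * π)

open Set

namespace ContinuousMap

section ApplyCLM

variable {𝕜 X E F : Type*} [NontriviallyNormedField 𝕜] [TopologicalSpace X] [CompactSpace X]
  [NormedAddCommGroup E] [NormedSpace 𝕜 E] [NormedAddCommGroup F] [NormedSpace 𝕜 F]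

def applyCLM (Φ : C(X, E →L[𝕜] F)) : E →L[𝕜] C(X, F) :=
  LinearMap.mkContinuous
    { toFun := fun f => ⟨fun x => Φ x f, Φ.continuous.clm_apply continuous_const⟩
      map_add' := fun f g => by ext; simp
      map_smul' := fun c f => by ext; simp }
    ‖Φ‖ fun f => (ContinuousMap.norm_le _ (by positivity)).2 fun x =>
      (Φ x).le_of_opNorm_le (Φ.norm_coe_le_norm x) f

theorem isCompactOperator_applyCLM [ProperSpace F] (Φ : C(X, E →L[𝕜] F)) :
    IsCompactOperator (applyCLM Φ) := by
  let e := (isometryEquivBoundedOfCompact X F).toHomeomorph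
  let A := e '' (applyCLM Φ '' Metric.closedBall 0 1)
  have hbound : ∀ g ∈ A, ∀ x, g x ∈ Metric.closedBall (0 : F) ‖Φ‖ := by
    rintro _ ⟨_, ⟨f, hf, rfl⟩, rfl⟩ x
    rw [mem_closedBall_zero_iff] at hf ⊢
    exact ((Φ x).le_of_opNorm_le (Φ.norm_coe_le_norm x) f).trans
      (mul_le_of_le_one_right (norm_nonneg Φ) hf)
  have hequi : Equicontinuous ((↑) : A → X → F) := by
    intro x₀
    rw [Metric.equicontinuousAt_iff_right]
    intro r hr
    filter_upwards [Metric.tendsto_nhds.mp (Φ.continuous.tendsto x₀) r hr] with x hx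
    rintro ⟨_, ⟨_, ⟨f, hf, rfl⟩, rfl⟩⟩
    rw [mem_closedBall_zero_iff] at hf
    calc dist (Φ x₀ f) (Φ x f) = ‖(Φ x₀ - Φ x) f‖ := by rw [dist_eq_norm]; rfl
      _ ≤ ‖Φ x₀ - Φ x‖ * ‖f‖ := (Φ x₀ - Φ x).le_opNorm f
      _ ≤ ‖Φ x₀ - Φ x‖ := mul_le_of_le_one_right (norm_nonneg _) hf
      _ < r := by rwa [← dist_eq_norm, dist_comm]
  have hA := BoundedContinuousFunction.arzela_ascoli _ (isCompact_closedBall (0 : F) ‖Φ‖) A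
    (fun g x hg => hbound g hg x) hequi
  refine (isCompactOperator_iff_isCompact_closure_image_closedBall
    (applyCLM Φ : E →ₗ[𝕜] C(X, F)) one_pos).mpr ?_
  rwa [← e.isCompact_image, e.image_closure]

end ApplyCLM

section IntegralOperator

variable {𝕜 X Y : Type*} [RCLike 𝕜] [TopologicalSpace X] [CompactSpace X]
  [TopologicalSpace Y] [CompactSpace Y] [MeasurableSpace Y] [OpensMeasurableSpace Y]

def integralCLM (ν : Measure Y) [IsFiniteMeasure ν] : C(Y, 𝕜) →L[𝕜] 𝕜 :=
  LinearMap.mkContinuous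
    { toFun := fun g => ∫ y, g y ∂ν
      map_add' := fun f g => integral_add ((BoundedContinuousFunction.mkOfCompact f).integrable ν)
        ((BoundedContinuousFunction.mkOfCompact g).integrable ν)
      map_smul' := fun c g => integral_smul c g }
    (ν.real univ) fun g => (BoundedContinuousFunction.mkOfCompact g).norm_integral_le_mul_norm ν

def integralOperator (ν : Measure Y) [IsFiniteMeasure ν] (k : C(X, C(Y, 𝕜))) :
    C(Y, 𝕜) →L[𝕜] C(X, 𝕜) :=
  let B := (ContinuousLinearMap.compL 𝕜 C(Y, 𝕜) C(Y, 𝕜) 𝕜 (integralCLM ν)).comp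
    (ContinuousLinearMap.mul 𝕜 C(Y, 𝕜))
  applyCLM ((⟨B, B.continuous⟩ : C(C(Y, 𝕜), C(Y, 𝕜) →L[𝕜] 𝕜)).comp k)

@[simp] lemma integralOperator_apply (ν : Measure Y) [IsFiniteMeasure ν] (k : C(X, C(Y, 𝕜)))
    (f : C(Y, 𝕜)) (x : X) : integralOperator ν k f x = ∫ y, k x y * f y ∂ν := rfl

theorem isCompactOperator_integralOperator (ν : Measure Y) [IsFiniteMeasure ν]
    (k : C(X, C(Y, 𝕜))) : IsCompactOperator (integralOperator ν k) :=
  isCompactOperator_applyCLM _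

end IntegralOperator

end ContinuousMap

theorem div_two_le_sub_of_le_deriv2 {g g' g'' : ℝ → ℝ} {C : ℝ}
    (hg : ∀ t, HasDerivAt g (g' t) t) (hg' : ∀ t, HasDerivAt g' (g'' t) t)
    (h0 : g' 0 = 0) (hC : ∀ t ∈ Icc (0 : ℝ) 1, C ≤ g'' t) : C / 2 ≤ g 1 - g 0 := by
  have hcont {φ φ' : ℝ → ℝ} (hφ : ∀ t, HasDerivAt φ (φ' t) t) : ContinuousOn φ (Icc 0 1) :=
    fun t _ => (hφ t).continuousAt.continuousWithinAt
  have hlin : ∀ t, HasDerivAt (fun t => g' t - C * t) (g'' t - C) t := fun t => by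
    simpa using (hg' t).fun_sub ((hasDerivAt_id' t).const_mul C)
  have hmono₁ : MonotoneOn (fun t => g' t - C * t) (Icc 0 1) :=
    monotoneOn_of_hasDerivWithinAt_nonneg (convex_Icc 0 1) (hcont hlin)
      (fun t _ => (hlin t).hasDerivWithinAt) fun t ht => by
        rw [interior_Icc] at ht
        linarith [hC t (Ioo_subset_Icc_self ht)]
  have hquad : ∀ t, HasDerivAt (fun t => g t - C / 2 * t ^ 2) (g' t - C * t) t := fun t => by
    refine ((hg t).fun_sub ((hasDerivAt_pow 2 t).const_mul (C / 2))).congr_deriv ?_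
    push_cast
    ring
  have hmono₂ : MonotoneOn (fun t => g t - C / 2 * t ^ 2) (Icc 0 1) :=
    monotoneOn_of_hasDerivWithinAt_nonneg (convex_Icc 0 1) (hcont hquad)
      (fun t _ => (hquad t).hasDerivWithinAt) fun t ht => by
        rw [interior_Icc] at ht
        have := hmono₁ (left_mem_Icc.2 zero_le_one) (Ioo_subset_Icc_self ht) ht.1.le
        simp only [h0, mul_zero, sub_zero] at this
        linarith
  have := hmono₂ (left_mem_Icc.2 zero_le_one) (right_mem_Icc.2 zero_le_one) zero_le_one
  simp only at this
  linarith

theorem exists_pos_mul_sq_le_of_pos {E : Type*} [NormedAddCommGroup E] [NormedSpace ℝ E]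
    [FiniteDimensional ℝ E] (B : E →L[ℝ] E →L[ℝ] ℝ) (hB : ∀ u ≠ 0, 0 < B u u) :
    ∃ m > 0, ∀ u, m * ‖u‖ ^ 2 ≤ B u u := by
  rcases subsingleton_or_nontrivial E with hE | hE
  · exact ⟨1, one_pos, fun u => by simp [Subsingleton.elim u 0]⟩
  obtain ⟨u₀, hu₀, hmin⟩ := (isCompact_sphere (0 : E) 1).exists_isMinOn
    (NormedSpace.sphere_nonempty.2 zero_le_one)
    (B.continuous.clm_apply continuous_id).continuousOn
  refine ⟨B u₀ u₀, hB u₀ (ne_zero_of_mem_unit_sphere ⟨u₀, hu₀⟩), fun u => ?_⟩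
  rcases eq_or_ne u 0 with rfl | hu
  · simp
  have hunit : ‖u‖⁻¹ • u ∈ Metric.sphere (0 : E) 1 := by
    simp [norm_smul, inv_mul_cancel₀ (norm_ne_zero_iff.2 hu)]
  have := hmin hunit
  simp only [mem_ofPred_eq, id, map_smul, smul_apply, smul_eq_mul] at this
  have hn : 0 < ‖u‖ := norm_pos_iff.2 hu
  calc B u₀ u₀ * ‖u‖ ^ 2 ≤ ‖u‖⁻¹ * (‖u‖⁻¹ * B u u) * ‖u‖ ^ 2 := by gcongr
    _ = B u u := by field_simp

theorem exists_mul_sq_le_sub_of_fderiv_eq_zero {E : Type*} [NormedAddCommGroup E]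
    [NormedSpace ℝ E] [FiniteDimensional ℝ E] {f : E → ℝ} {x₀ : E} (hf : ContDiff ℝ 2 f)
    (hd : fderiv ℝ f x₀ = 0) (hpos : ∀ u ≠ 0, 0 < fderiv ℝ (fderiv ℝ f) x₀ u u) :
    ∃ c > 0, ∃ r > 0, ∀ q, ‖q‖ < r → c * ‖q‖ ^ 2 ≤ f (x₀ + q) - f x₀ := by
  set f'' := fderiv ℝ (fderiv ℝ f)
  have hf' : ContDiff ℝ 1 (fderiv ℝ f) := hf.fderiv_right le_rfl
  obtain ⟨m, hm, hcoer⟩ := exists_pos_mul_sq_le_of_pos (f'' x₀) hpos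
  obtain ⟨r, hr, hclose⟩ := Metric.continuousAt_iff.mp
    (hf'.continuous_fderiv one_ne_zero).continuousAt (m / 2) (half_pos hm)
  refine ⟨m / 4, by positivity, r, hr, fun q hq => ?_⟩
  have hlow : ∀ t ∈ Icc (0 : ℝ) 1, m / 2 * ‖q‖ ^ 2 ≤ f'' (x₀ + t • q) q q := fun t ht => by
    have hdist : dist (x₀ + t • q) x₀ < r := by
      rw [dist_eq_norm, add_sub_cancel_left, norm_smul, Real.norm_of_nonneg ht.1]
      exact (mul_le_of_le_one_left (norm_nonneg q) ht.2).trans_lt hq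
    have hpert : |(f'' (x₀ + t • q) - f'' x₀) q q| ≤ m / 2 * ‖q‖ ^ 2 := by
      rw [← Real.norm_eq_abs, sq, ← mul_assoc]
      refine ((f'' (x₀ + t • q) - f'' x₀).le_opNorm₂ q q).trans ?_
      gcongr
      exact (dist_eq_norm (f'' (x₀ + t • q)) (f'' x₀) ▸ hclose hdist).le
    rw [sub_apply, sub_apply] at hpert
    linarith [hcoer q, (abs_le.mp hpert).1]
  have hline : ∀ t : ℝ, HasDerivAt (fun t : ℝ => x₀ + t • q) q t := fun t => by
    simpa using ((hasDerivAt_id t).smul_const q).const_add x₀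
  have key := div_two_le_sub_of_le_deriv2 (g := fun t => f (x₀ + t • q))
    (g' := fun t => fderiv ℝ f (x₀ + t • q) q) (g'' := fun t => f'' (x₀ + t • q) q q)
    (fun t => ((hf.differentiable two_ne_zero).differentiableAt.hasFDerivAt).comp_hasDerivAt t
      (hline t))
    (fun t => by
      simpa using (((hf'.differentiable one_ne_zero).differentiableAt.hasFDerivAt).comp_hasDerivAt
        t (hline t)).clm_apply (hasDerivAt_const t q))
    (by simp [hd]) (fun t ht => hlow t ht)
  simp only [one_smul, zero_smul, add_zero] at key
  linarith

theorem integrableOn_inv_of_mul_sq_le {E : Type*} [NormedAddCommGroup E] [NormedSpace ℝ E]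
    [FiniteDimensional ℝ E] [MeasurableSpace E] [BorelSpace E] (μ : Measure E)
    [μ.IsAddHaarMeasure] (hE : 2 < Module.finrank ℝ E) {g : E → ℝ} (hg : Continuous g)
    {K : Set E} (hK : IsCompact K) (hpos : ∀ q ∈ K, q ≠ 0 → 0 < g q) {c r : ℝ} (hc : 0 < c)
    (hr : 0 < r) (hnear : ∀ q, ‖q‖ < r → c * ‖q‖ ^ 2 ≤ g q) :
    IntegrableOn (fun q => (g q)⁻¹) K μ := by
  have : Nontrivial E := Module.nontrivial_of_finrank_pos (R := ℝ) (by omega)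
  have hball : IntegrableOn (fun q => (g q)⁻¹) (Metric.ball 0 r) μ := by
    refine integrableOn_ball_of_norm_le_rpow (by omega) (C := c⁻¹) (α := 2)
      (by exact_mod_cast hE) ?_ hg.measurable.inv.aestronglyMeasurable
    filter_upwards [ae_restrict_mem measurableSet_ball, ae_restrict_of_ae (μ.ae_ne 0)]
      with q hq hq0
    have hq2 : 0 < c * ‖q‖ ^ 2 := by positivity
    rw [Real.norm_of_nonneg (inv_nonneg.2 (hq2.le.trans (hnear q (mem_ball_zero_iff.1 hq)))),
      Real.rpow_neg (norm_nonneg q), ← mul_inv, Real.rpow_two]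
    exact inv_anti₀ hq2 (hnear q (mem_ball_zero_iff.1 hq))
  have hfar : IntegrableOn (fun q => (g q)⁻¹) (K \ Metric.ball 0 r) μ := by
    refine ContinuousOn.integrableOn_compact (hK.diff Metric.isOpen_ball) ?_
    refine hg.continuousOn.inv₀ fun q hq => (hpos q hq.1 ?_).ne'
    rintro rfl
    exact hq.2 (Metric.mem_ball_self hr)
  exact (hball.union hfar).mono_set fun q hq => by
    by_cases h : q ∈ Metric.ball 0 r
    · exact Or.inl h
    · exact Or.inr ⟨hq, h⟩

theorem exists_continuousMap_addCircle_comp_eq {ι Z : Type*} [TopologicalSpace Z] {T : ℝ}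
    {v : (ι → ℝ) → Z} (hv : Continuous v)
    (hper : ∀ (p : ι → ℝ) (s : ι → ℤ), v (fun i => p i + T * s i) = v p) :
    ∃ vT : C(ι → AddCircle T, Z), ∀ p : ι → ℝ, vT (fun i => p i) = v p := by
  let proj : C(ι → ℝ, ι → AddCircle T) := ⟨fun p i => p i, by fun_prop⟩
  have hproj : Topology.IsQuotientMap proj :=
    (IsOpenQuotientMap.piMap fun _ => QuotientAddGroup.isOpenQuotientMap_mk).isQuotientMap
  have hfactors : Function.FactorsThrough v proj := by
    intro a b hab
    have hdiff : ∀ i, ∃ n : ℤ, n • T = a i - b i := fun i => by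
      rw [← AddCircle.coe_eq_zero_iff, AddCircle.coe_sub, sub_eq_zero]
      exact congrFun hab i
    choose s hs using hdiff
    rw [← hper b s]
    congr 1
    funext i
    rw [mul_comm, ← zsmul_eq_mul, hs i, add_sub_cancel]
  exact ⟨hproj.lift ⟨v, hv⟩ hfactors, DFunLike.congr_fun (hproj.lift_comp ⟨v, hv⟩ hfactors)⟩

theorem integral_map_withDensity_ofReal {α Y E : Type*} [MeasurableSpace α] [TopologicalSpace Y]
    [MeasurableSpace Y] [OpensMeasurableSpace Y] [NormedAddCommGroup E] [NormedSpace ℝ E]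
    [SecondCountableTopologyEither Y E] {μ : Measure α} {e : α → Y} (he : Measurable e)
    {w : α → ℝ} (hw : Measurable w) (hw0 : ∀ a, 0 ≤ w a) {g : Y → E} (hg : Continuous g) :
    ∫ y, g y ∂(μ.withDensity fun a => ENNReal.ofReal (w a)).map e = ∫ a, w a • g (e a) ∂μ := by
  rw [integral_map he.aemeasurable hg.aestronglyMeasurable,
    integral_withDensity_eq_integral_toReal_smul hw.ennreal_ofReal
      (ae_of_all _ fun _ => ENNReal.ofReal_lt_top)]
  simp_rw [ENNReal.toReal_ofReal (hw0 _)]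

theorem eq_zero_of_mem_cube3 {q : Fin 3 → ℝ} (hq : q ∈ cube3)
    (hlat : ∀ i, ∃ n : ℤ, q i = 2 * π * n) : q = 0 := by
  funext i
  obtain ⟨n, hn⟩ := hlat i
  have hlo := hq.1 i
  have hhi := hq.2 i
  simp only [hn] at hlo hhi
  have hn0 : n = 0 := by
    have : |(n : ℝ)| < 1 := by
      rw [abs_lt]; constructor <;> nlinarith [pi_pos]
    exact Int.abs_lt_one_iff.1 (by exact_mod_cast this)
  simp [hn, hn0]

theorem apply_zero_le_of_periodic {ε : (Fin 3 → ℝ) → ℝ}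
    (hεper : ∀ (p : Fin 3 → ℝ) (s : Fin 3 → ℤ), ε (fun i => p i + 2 * π * (s i : ℝ)) = ε p)
    (hmin : ∀ p : Fin 3 → ℝ, ¬ (∀ i, ∃ n : ℤ, p i = 2 * π * n) → ε 0 < ε p) (q : Fin 3 → ℝ) :
    ε 0 ≤ ε q := by
  by_cases hlat : ∀ i, ∃ n : ℤ, q i = 2 * π * n
  · choose n hn using hlat
    have hq : q = fun i => (0 : Fin 3 → ℝ) i + 2 * π * n i := funext fun i => by simp [hn i]
    rw [hq, hεper]
  · exact (hmin q hlat).le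

theorem integrableOn_cube3_inv_sub {ε : (Fin 3 → ℝ) → ℝ}
    (hεper : ∀ (p : Fin 3 → ℝ) (s : Fin 3 → ℤ), ε (fun i => p i + 2 * π * (s i : ℝ)) = ε p)
    (hsmooth : ContDiff ℝ 2 ε)
    (hmin : ∀ p : Fin 3 → ℝ, ¬ (∀ i, ∃ n : ℤ, p i = 2 * π * n) → ε 0 < ε p)
    (hhess : ∀ u : Fin 3 → ℝ, u ≠ 0 → 0 < iteratedFDeriv ℝ 2 ε 0 ![u, u])
    {lam : ℝ} (hlam : lam ≤ ε 0) :
    IntegrableOn (fun q => (ε q - lam)⁻¹) cube3 := by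
  have hge := apply_zero_le_of_periodic hεper hmin
  have hd : fderiv ℝ ε 0 = 0 := IsLocalMin.fderiv_eq_zero (Filter.Eventually.of_forall hge)
  obtain ⟨c, hc, r, hr, hnear⟩ := exists_mul_sq_le_sub_of_fderiv_eq_zero hsmooth hd
    fun u hu => by simpa [iteratedFDeriv_two_apply] using hhess u hu
  refine integrableOn_inv_of_mul_sq_le volume (g := fun q => ε q - lam) (by simp)
    (hsmooth.continuous.sub continuous_const) isCompact_Icc (fun q hq hq0 => ?_) hc hr
    fun q hq => ?_
  · linarith [hmin q fun hlat => hq0 (eq_zero_of_mem_cube3 hq hlat)]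
  · have := hnear q hq
    rw [zero_add] at this
    linarith

/-- the Birman–Schwinger operator `G(λ)` is a compact bounded
operator on `C(𝕋³)`. -/
theorem birmanSchwinger_compact
    (ε : (Fin 3 → ℝ) → ℝ)
    (hεper : ∀ (p : Fin 3 → ℝ) (s : Fin 3 → ℤ),
      ε (fun i => p i + 2 * π * (s i : ℝ)) = ε p)
    (hsmooth : ContDiff ℝ 2 ε)
    (hmin : ∀ p : Fin 3 → ℝ, ¬ (∀ i, ∃ n : ℤ, p i = 2 * π * n) → ε 0 < ε p)
    (hhess : ∀ u : Fin 3 → ℝ, u ≠ 0 → 0 < iteratedFDeriv ℝ 2 ε 0 ![u, u])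
    (v : (Fin 3 → ℝ) → ℂ)
    (hv : Continuous v)
    (hvper : ∀ (p : Fin 3 → ℝ) (s : Fin 3 → ℤ),
      v (fun i => p i + 2 * π * (s i : ℝ)) = v p)
    (lam : ℝ) (hlam : lam ≤ ε 0) :
    ∃ G : C(Torus3, ℂ) →L[ℂ] C(Torus3, ℂ),
      (∀ (f : C(Torus3, ℂ)) (p : Fin 3 → ℝ),
        G f (fun i => (p i : AddCircle (2 * π))) =
          (((2 * π) ^ (-(3 : ℝ) / 2) : ℝ) : ℂ) *
            ∫ q in cube3,
              v (p - q) * (((ε q - lam)⁻¹ : ℝ) : ℂ) *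
                f (fun i => (q i : AddCircle (2 * π)))) ∧
      IsCompactOperator G := by
  obtain ⟨vT, hvT⟩ := exists_continuousMap_addCircle_comp_eq hv hvper
  let proj : (Fin 3 → ℝ) → Torus3 := fun p i => p i
  let k : C(Torus3, C(Torus3, ℂ)) :=
    ContinuousMap.curry ⟨fun x : Torus3 × Torus3 => vT (x.1 - x.2), by fun_prop⟩
  set w : (Fin 3 → ℝ) → ℝ := fun q => (ε q - lam)⁻¹
  have hw : IntegrableOn w cube3 := integrableOn_cube3_inv_sub hεper hsmooth hmin hhess hlam
  have hw0 : ∀ q, 0 ≤ w q := fun q =>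
    inv_nonneg.2 (by linarith [apply_zero_le_of_periodic hεper hmin q])
  let ν := ((volume.restrict cube3).withDensity fun q => ENNReal.ofReal (w q)).map proj
  have : IsFiniteMeasure ν := by
    have := isFiniteMeasure_withDensity_ofReal hw.2
    infer_instance
  let c : ℂ := (((2 * π) ^ (-(3 : ℝ) / 2) : ℝ) : ℂ)
  refine ⟨c • ContinuousMap.integralOperator ν k, fun f p => ?_,
    (ContinuousMap.isCompactOperator_integralOperator ν k).smul c⟩
  have hproj : Measurable proj := (by fun_prop : Continuous proj).measurable
  have hwm : Measurable w := (hsmooth.continuous.sub continuous_const).measurable.inv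
  rw [smul_apply, ContinuousMap.smul_apply, smul_eq_mul, ContinuousMap.integralOperator_apply]
  congr 1
  refine (integral_map_withDensity_ofReal hproj hwm hw0 (by fun_prop)).trans
    (integral_congr_ae (ae_of_all _ fun q => ?_))
  simp only [k, ContinuousMap.curry_apply, ContinuousMap.coe_mk]
  rw [show proj p - proj q = proj (p - q) from rfl, hvT, Complex.real_smul]
  ring
end
end

section
/- Let ε̂₁, ε̂₂ : ℤ³ → ℝ both be absolutely summable with ε̂_α(−s) = ε̂_α(s) and ε̂_α(s) ≤ 0 for s ≠ 0, define ε_α(p) = Σ_{s∈ℤ³} ε̂_α(s)·cos⟨p,s⟩ for α = 1, 2, and assume ε_α(p) > ε_α(0) for every p ∈ ℝ³ \ (2πℤ)³ and α = 1, 2. Set E_k(p) = ε₁(p) + ε₂(k−p) for k, p ∈ ℝ³. Then for all fixed k, q ∈ ℝ³ such that not both q ∈ (2πℤ)³ and k − q ∈ (2πℤ)³, the inequality E₀(p) − E₀(0) + E_k(q) − (E_k(p+q) + E_k(q−p))/2 > 0 holds for Lebesgue-almost every p ∈ ℝ³. -/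
open MeasureTheory Real Pointwise

/-- strict inequality for the two-particle dispersion relations
`E_k(p) = ε₁(p) + ε₂(k - p)` built from two Lévy–Khinchin type one-particle
dispersion relations. -/
theorem two_particle_dispersion_strict_inequality
    (εhat₁ εhat₂ : (Fin 3 → ℤ) → ℝ)
    (hsum₁ : Summable fun s => |εhat₁ s|)
    (hsum₂ : Summable fun s => |εhat₂ s|)
    (hsymm₁ : ∀ s, εhat₁ (-s) = εhat₁ s)
    (hsymm₂ : ∀ s, εhat₂ (-s) = εhat₂ s)
    (hneg₁ : ∀ s, s ≠ 0 → εhat₁ s ≤ 0)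
    (hneg₂ : ∀ s, s ≠ 0 → εhat₂ s ≤ 0)
    (ε₁ ε₂ : (Fin 3 → ℝ) → ℝ)
    (hε₁ : ∀ p, ε₁ p = ∑' s : Fin 3 → ℤ, εhat₁ s * Real.cos (∑ i, p i * (s i : ℝ)))
    (hε₂ : ∀ p, ε₂ p = ∑' s : Fin 3 → ℤ, εhat₂ s * Real.cos (∑ i, p i * (s i : ℝ)))
    (hmin₁ : ∀ p : Fin 3 → ℝ, ¬ (∀ i, ∃ n : ℤ, p i = 2 * π * n) → ε₁ 0 < ε₁ p)
    (hmin₂ : ∀ p : Fin 3 → ℝ, ¬ (∀ i, ∃ n : ℤ, p i = 2 * π * n) → ε₂ 0 < ε₂ p)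
    (E : (Fin 3 → ℝ) → (Fin 3 → ℝ) → ℝ)
    (hE : ∀ k p, E k p = ε₁ p + ε₂ (k - p))
    (k q : Fin 3 → ℝ)
    (hkq : ¬ ((∀ i, ∃ n : ℤ, q i = 2 * π * n) ∧
              (∀ i, ∃ n : ℤ, k i - q i = 2 * π * n))) :
    ∀ᵐ p : Fin 3 → ℝ ∂volume,
      E 0 p - E 0 0 + E k q - (E k (p + q) + E k (q - p)) / 2 > 0 := by
  classical
  have mnn : ∀ a b : ℝ, a ≤ 0 → b ≤ 0 → 0 ≤ a * b := fun a b ha hb => by nlinarith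
  set A : (Fin 3 → ℝ) → (Fin 3 → ℤ) → ℝ := fun x s => ∑ i, x i * (s i : ℝ) with hAdef
  have hAadd : ∀ x y s, A (x + y) s = A x s + A y s := by
    intro x y s; simp [A, add_mul, Finset.sum_add_distrib]
  have hAsub : ∀ x y s, A (x - y) s = A x s - A y s := by
    intro x y s; simp [A, sub_mul, Finset.sum_sub_distrib]
  have hA0 : ∀ s, A 0 s = 0 := by intro s; simp [A]
  have hA0' : ∀ x, A x 0 = 0 := by intro x; simp [A]
  -- HasSum statements
  have H1 : ∀ x, HasSum (fun s => εhat₁ s * Real.cos (A x s)) (ε₁ x) := by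
    intro x
    have hs : Summable (fun s => εhat₁ s * Real.cos (A x s)) := by
      refine Summable.of_abs (Summable.of_nonneg_of_le (fun s => abs_nonneg _) (fun s => ?_) hsum₁)
      rw [abs_mul]
      exact mul_le_of_le_one_right (abs_nonneg _) (abs_cos_le_one _)
    rw [hε₁ x]; exact hs.hasSum
  have H2 : ∀ x, HasSum (fun s => εhat₂ s * Real.cos (A x s)) (ε₂ x) := by
    intro x
    have hs : Summable (fun s => εhat₂ s * Real.cos (A x s)) := by
      refine Summable.of_abs (Summable.of_nonneg_of_le (fun s => abs_nonneg _) (fun s => ?_) hsum₂)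
      rw [abs_mul]
      exact mul_le_of_le_one_right (abs_nonneg _) (abs_cos_le_one _)
    rw [hε₂ x]; exact hs.hasSum
  set g : (Fin 3 → ℤ) → ℝ :=
    fun s => εhat₁ s * (Real.cos (A q s) - 1) + εhat₂ s * (Real.cos (A (k - q) s) - 1) with hgdef
  have hg0 : g 0 = 0 := by simp [g, hA0']
  have hparts : ∀ s, 0 ≤ εhat₁ s * (Real.cos (A q s) - 1) ∧
      0 ≤ εhat₂ s * (Real.cos (A (k - q) s) - 1) := by
    intro s
    by_cases hs : s = 0
    · subst hs; simp [hA0']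
    · exact ⟨mnn _ _ (hneg₁ s hs) (by linarith [Real.cos_le_one (A q s)]),
        mnn _ _ (hneg₂ s hs) (by linarith [Real.cos_le_one (A (k - q) s)])⟩
  have hgnn : ∀ s, 0 ≤ g s := by
    intro s; have := hparts s; simp only [g]; linarith [this.1, this.2]
  -- existence of s₀ with g s₀ > 0
  have hex : ∃ s₀, 0 < g s₀ := by
    by_contra hcon
    push_neg at hcon
    have hzero : ∀ s, εhat₁ s * (Real.cos (A q s) - 1) = 0 ∧
        εhat₂ s * (Real.cos (A (k - q) s) - 1) = 0 := by
      intro s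
      have h := hparts s
      have hg := hcon s
      simp only [g] at hg
      constructor <;> linarith [h.1, h.2]
    have Hd1 : HasSum (fun s => εhat₁ s * (Real.cos (A q s) - 1)) (ε₁ q - ε₁ 0) := by
      have h := (H1 q).sub (H1 0)
      have hfun : (fun s => εhat₁ s * (Real.cos (A q s) - 1)) =
          fun s => εhat₁ s * Real.cos (A q s) - εhat₁ s * Real.cos (A 0 s) := by
        funext s; rw [hA0, Real.cos_zero]; ring
      rw [hfun]; exact h
    have Hd2 : HasSum (fun s => εhat₂ s * (Real.cos (A (k - q) s) - 1)) (ε₂ (k - q) - ε₂ 0) := by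
      have h := (H2 (k - q)).sub (H2 0)
      have hfun : (fun s => εhat₂ s * (Real.cos (A (k - q) s) - 1)) =
          fun s => εhat₂ s * Real.cos (A (k - q) s) - εhat₂ s * Real.cos (A 0 s) := by
        funext s; rw [hA0, Real.cos_zero]; ring
      rw [hfun]; exact h
    have he1 : ε₁ q - ε₁ 0 = 0 := by
      have : HasSum (fun _ : Fin 3 → ℤ => (0 : ℝ)) (ε₁ q - ε₁ 0) := by
        have hfun : (fun s => εhat₁ s * (Real.cos (A q s) - 1)) =
            fun _ : Fin 3 → ℤ => (0 : ℝ) := funext fun s => (hzero s).1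
        rwa [hfun] at Hd1
      exact this.unique hasSum_zero
    have he2 : ε₂ (k - q) - ε₂ 0 = 0 := by
      have : HasSum (fun _ : Fin 3 → ℤ => (0 : ℝ)) (ε₂ (k - q) - ε₂ 0) := by
        have hfun : (fun s => εhat₂ s * (Real.cos (A (k - q) s) - 1)) =
            fun _ : Fin 3 → ℤ => (0 : ℝ) := funext fun s => (hzero s).2
        rwa [hfun] at Hd2
      exact this.unique hasSum_zero
    refine hkq ⟨?_, ?_⟩
    · by_contra hq
      exact absurd he1 (by have := hmin₁ q hq; linarith)
    · by_contra hq'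
      have hq'' : ¬ (∀ i, ∃ n : ℤ, (k - q) i = 2 * π * n) := by
        simpa [Pi.sub_apply] using hq'
      exact absurd he2 (by have := hmin₂ (k - q) hq''; linarith)
  obtain ⟨s₀, hs₀⟩ := hex
  have hs₀ne : s₀ ≠ 0 := by rintro rfl; rw [hg0] at hs₀; exact lt_irrefl 0 hs₀
  obtain ⟨i₀, hi₀⟩ : ∃ i, s₀ i ≠ 0 := Function.ne_iff.mp hs₀ne
  -- the bad set is null
  set L : (Fin 3 → ℝ) →ₗ[ℝ] ℝ :=
    { toFun := fun x => ∑ i, x i * (s₀ i : ℝ)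
      map_add' := by intro x y; simp [add_mul, Finset.sum_add_distrib]
      map_smul' := by intro c x; simp [Finset.mul_sum, mul_assoc] } with hLdef
  have hLsingle : L (Pi.single i₀ 1) = (s₀ i₀ : ℝ) := by
    simp only [hLdef, LinearMap.coe_mk, AddHom.coe_mk]
    rw [Finset.sum_eq_single i₀]
    · simp
    · intro b _ hb; simp [Pi.single_apply, hb]
    · intro h; exact absurd (Finset.mem_univ i₀) h
  have hLne : L ≠ 0 := by
    intro h
    apply hi₀
    have h0 : (0 : (Fin 3 → ℝ) →ₗ[ℝ] ℝ) (Pi.single i₀ 1) = (s₀ i₀ : ℝ) := h ▸ hLsingle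
    simp only [LinearMap.zero_apply] at h0
    exact_mod_cast h0.symm
  have hker : volume (LinearMap.ker L : Set (Fin 3 → ℝ)) = 0 :=
    Measure.addHaar_submodule volume _ (by simpa [LinearMap.ker_eq_top] using hLne)
  have hplane : ∀ c : ℝ, volume {x : Fin 3 → ℝ | L x = c} = 0 := by
    intro c
    set x₀ : Fin 3 → ℝ := (c / (s₀ i₀ : ℝ)) • (Pi.single i₀ 1 : Fin 3 → ℝ) with hx₀
    have hLx₀ : L x₀ = c := by
      rw [hx₀, L.map_smul, hLsingle, smul_eq_mul, div_mul_cancel₀]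
      exact_mod_cast hi₀
    have hset : {x : Fin 3 → ℝ | L x = c} = x₀ +ᵥ (LinearMap.ker L : Set (Fin 3 → ℝ)) := by
      ext x
      simp only [Set.mem_setOf_eq, Set.mem_vadd_set, SetLike.mem_coe, LinearMap.mem_ker]
      constructor
      · intro hx
        exact ⟨x - x₀, by rw [map_sub, hx, hLx₀, sub_self], by simp [vadd_eq_add]⟩
      · rintro ⟨y, hy, rfl⟩
        simp [vadd_eq_add, map_add, hy, hLx₀]
    rw [hset, measure_vadd]
    exact hker
  have hbad : volume {p : Fin 3 → ℝ | Real.cos (A p s₀) = 1} = 0 := by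
    have hsub : {p : Fin 3 → ℝ | Real.cos (A p s₀) = 1} ⊆
        ⋃ n : ℤ, {x : Fin 3 → ℝ | L x = (n : ℝ) * (2 * π)} := by
      intro p hp
      obtain ⟨n, hn⟩ := (Real.cos_eq_one_iff _).mp hp
      exact Set.mem_iUnion.mpr ⟨n, hn.symm⟩
    exact measure_mono_null hsub (measure_iUnion_null fun n => hplane _)
  have hae : ∀ᵐ p : Fin 3 → ℝ ∂volume, Real.cos (A p s₀) ≠ 1 := by
    rw [MeasureTheory.ae_iff]
    simpa using hbad
  filter_upwards [hae] with p hp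
  -- the main computation
  have Hbig : HasSum
      (fun s => (εhat₁ s * Real.cos (A p s) + εhat₂ s * Real.cos (A (0 - p) s)) -
        (εhat₁ s * Real.cos (A 0 s) + εhat₂ s * Real.cos (A (0 - 0) s)) +
        (εhat₁ s * Real.cos (A q s) + εhat₂ s * Real.cos (A (k - q) s)) -
        ((εhat₁ s * Real.cos (A (p + q) s) + εhat₂ s * Real.cos (A (k - (p + q)) s)) +
         (εhat₁ s * Real.cos (A (q - p) s) + εhat₂ s * Real.cos (A (k - (q - p)) s))) / 2)
      ((ε₁ p + ε₂ (0 - p)) - (ε₁ 0 + ε₂ (0 - 0)) + (ε₁ q + ε₂ (k - q)) -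
        ((ε₁ (p + q) + ε₂ (k - (p + q))) + (ε₁ (q - p) + ε₂ (k - (q - p)))) / 2) :=
    ((((H1 p).add (H2 (0 - p))).sub ((H1 0).add (H2 (0 - 0)))).add
      ((H1 q).add (H2 (k - q)))).sub
      ((((H1 (p + q)).add (H2 (k - (p + q)))).add
        ((H1 (q - p)).add (H2 (k - (q - p))))).div_const 2)
  have hfun : (fun s => (εhat₁ s * Real.cos (A p s) + εhat₂ s * Real.cos (A (0 - p) s)) -
        (εhat₁ s * Real.cos (A 0 s) + εhat₂ s * Real.cos (A (0 - 0) s)) +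
        (εhat₁ s * Real.cos (A q s) + εhat₂ s * Real.cos (A (k - q) s)) -
        ((εhat₁ s * Real.cos (A (p + q) s) + εhat₂ s * Real.cos (A (k - (p + q)) s)) +
         (εhat₁ s * Real.cos (A (q - p) s) + εhat₂ s * Real.cos (A (k - (q - p)) s))) / 2) =
      fun s => (1 - Real.cos (A p s)) * g s := by
    funext s
    simp only [g, hAsub, hAadd, hA0]
    simp only [zero_sub, sub_zero, Real.cos_neg, Real.cos_zero, Real.cos_sub, Real.cos_add,
      Real.sin_add, Real.sin_sub, Real.sin_neg, Real.sin_zero]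
    ring
  rw [hfun] at Hbig
  have hle : (1 - Real.cos (A p s₀)) * g s₀ ≤
      (ε₁ p + ε₂ (0 - p)) - (ε₁ 0 + ε₂ (0 - 0)) + (ε₁ q + ε₂ (k - q)) -
        ((ε₁ (p + q) + ε₂ (k - (p + q))) + (ε₁ (q - p) + ε₂ (k - (q - p)))) / 2 := by
    refine le_hasSum Hbig s₀ fun s _ => ?_
    exact mul_nonneg (by linarith [Real.cos_le_one (A p s)]) (hgnn s)
  have hpos : 0 < (1 - Real.cos (A p s₀)) * g s₀ := by
    refine mul_pos ?_ hs₀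
    have := Real.cos_le_one (A p s₀)
    rcases lt_or_eq_of_le this with h | h
    · linarith
    · exact absurd h hp
  rw [hE 0 p, hE 0 0, hE k q, hE k (p + q), hE k (q - p)]
  exact lt_of_lt_of_le hpos hle
end

section
/- Let ε : ℝ³ → ℝ be continuous and 2π-periodic in each coordinate, let v : ℝ³ → ℂ be continuous and 2π-periodic in each coordinate with v(−p) = conj(v(p)), and let λ < min_{p∈[−π,π]³} ε(p). Then the map ψ ↦ f_ψ, where f_ψ(p) = ψ(p)/(ε(p) − λ), is a linear bijection from the space of continuous 2π-periodic functions ψ : ℝ³ → ℂ satisfying (2π)^{−3/2} ∫_{[−π,π]³} v(p−q)·(ε(q) − λ)^{−1}·ψ(q) dq = −ψ(p) for all p, onto the space of f ∈ L²([−π,π]³) satisfying ε(p)·f(p) + (2π)^{−3/2} ∫_{[−π,π]³} v(p−q) f(q) dq = λ·f(p) for almost every p. In particular, λ is an eigenvalue of the operator h = (multiplication by ε) + (convolution by v) on L²([−π,π]³) if and only if −1 is an eigenvalue of the Birman–Schwinger operator G(λ) on continuous functions, and the corresponding eigenspaces have equal dimension. -/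
open MeasureTheory Real

noncomputable section

/-- Lebesgue measure restricted to the cube `[-π,π]³`. -/
def μ3 : Measure (Fin 3 → ℝ) := volume.restrict cube3

/-!
The gap `ε - λ` is continuous and positive (`ε` is periodic, so `λ` lies below its whole range), so
`ψ ↦ ψ / (ε - λ)` is injective and turns the Birman–Schwinger equation for `ψ` into the eigenvalue
equation for `f`. Conversely, the eigenvalue equation says that `(ε - λ) f` agrees a.e. with
`ψ := -(2π)^{-3/2} ∫ v(· - q) f(q) dq`, which is continuous (a convolution of the bounded continuous
`v` with `f ∈ L² ⊆ L¹` of the cube) and periodic; so every eigenfunction of `h` has such a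
representative. Finally a continuous periodic function vanishing a.e. on the cube vanishes.
-/

open Set Filter

def IsTorusPeriodic {ι α : Type*} (f : (ι → ℝ) → α) : Prop :=
  ∀ (p : ι → ℝ) (s : ι → ℤ), f (fun i => p i + 2 * π * (s i : ℝ)) = f p

lemma exists_add_two_pi_mul_int_mem_Icc {ι : Type*} (p : ι → ℝ) :
    ∃ s : ι → ℤ, (fun i => p i + 2 * π * (s i : ℝ)) ∈ Icc (fun _ => -π) (fun _ => π) := by
  have h2π : 0 < 2 * π := by positivity
  refine ⟨fun i => -toIcoDiv h2π (-π) (p i), fun i => ?_, fun i => ?_⟩ <;>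
  · have h := toIcoMod_mem_Ico h2π (-π) (p i)
    rw [← self_sub_toIcoDiv_zsmul, zsmul_eq_mul] at h
    have hshift : p i + 2 * π * ((-toIcoDiv h2π (-π) (p i) : ℤ) : ℝ) =
        p i - toIcoDiv h2π (-π) (p i) * (2 * π) := by push_cast; ring
    simp only [hshift]
    linarith [h.1, h.2]

lemma cube3_subset_closure_interior : cube3 ⊆ closure (interior cube3) := by
  rw [cube3, ← pi_univ_Icc, interior_pi_set finite_univ, closure_pi_set]
  exact pi_mono fun _ _ => (closure_interior_Icc (by linarith [pi_pos] : -π ≠ π)).symm.subset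

instance : IsFiniteMeasure μ3 :=
  isFiniteMeasure_restrict.2 isCompact_Icc.measure_lt_top.ne

lemma memLp_μ3_of_continuous {E : Type*} [NormedAddCommGroup E] {f : (Fin 3 → ℝ) → E}
    (hf : Continuous f) (r : ENNReal) : MemLp f r μ3 := by
  obtain ⟨C, hC⟩ := isCompact_Icc.exists_bound_of_continuousOn hf.continuousOn
  have hbound : ∀ᵐ x ∂μ3, ‖f x‖ ≤ C := (ae_restrict_iff' measurableSet_Icc).2 (ae_of_all _ hC)
  exact (memLp_top_of_bound hf.aestronglyMeasurable C hbound).mono_exponent le_top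

lemma continuous_integral_comp_sub_mul {G : Type*} [AddGroup G] [TopologicalSpace G]
    [IsTopologicalAddGroup G] [FirstCountableTopology G] [MeasurableSpace G] [BorelSpace G]
    {μ : Measure G} {v f : G → ℂ} (hvc : Continuous v)
    (hvb : BddAbove (range fun x => ‖v x‖)) (hf : Integrable f μ) :
    Continuous fun p => ∫ q, v (p - q) * f q ∂μ :=
  hvb.continuous_convolution_right_of_integrable (ContinuousLinearMap.mul ℂ ℂ).flip hf hvc

namespace IsTorusPeriodic

lemma integral_comp_sub_mul {ι : Type*} {μ : Measure (ι → ℝ)} {v : (ι → ℝ) → ℂ}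
    (hv : IsTorusPeriodic v) (f : (ι → ℝ) → ℂ) :
    IsTorusPeriodic fun p => ∫ q, v (p - q) * f q ∂μ := by
  intro p s
  refine integral_congr_ae (ae_of_all _ fun q => ?_)
  have hshift : (fun i => p i + 2 * π * (s i : ℝ)) - q =
      fun i => (p - q) i + 2 * π * (s i : ℝ) := by
    ext i; simp only [Pi.sub_apply]; ring
  dsimp only
  rw [hshift, hv]

variable {α : Type*} {f : (Fin 3 → ℝ) → α}

lemma forall_of_forall_mem_cube3 (hf : IsTorusPeriodic f) {P : α → Prop}
    (h : ∀ p ∈ cube3, P (f p)) (p : Fin 3 → ℝ) : P (f p) := by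
  obtain ⟨s, hs⟩ := exists_add_two_pi_mul_int_mem_Icc p
  exact hf p s ▸ h _ hs

lemma bddAbove_range_norm {E : Type*} [SeminormedAddCommGroup E] {f : (Fin 3 → ℝ) → E}
    (hf : IsTorusPeriodic f) (hfc : Continuous f) : BddAbove (range fun x => ‖f x‖) := by
  obtain ⟨C, hC⟩ := isCompact_Icc.exists_bound_of_continuousOn hfc.continuousOn
  exact ⟨C, forall_mem_range.2 (hf.forall_of_forall_mem_cube3 (P := (‖·‖ ≤ C)) hC)⟩

lemma eq_of_ae_eq [TopologicalSpace α] [T2Space α] {g : (Fin 3 → ℝ) → α}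
    (hf : IsTorusPeriodic f) (hg : IsTorusPeriodic g) (hfc : Continuous f) (hgc : Continuous g)
    (h : f =ᵐ[μ3] g) : f = g := by
  have hcube : EqOn f g cube3 :=
    Measure.eqOn_of_ae_eq h hfc.continuousOn hgc.continuousOn cube3_subset_closure_interior
  funext p
  obtain ⟨s, hs⟩ := exists_add_two_pi_mul_int_mem_Icc p
  rw [← hf p s, ← hg p s, hcube hs]

end IsTorusPeriodic

section BirmanSchwinger

/-- The `(-1)`-eigenspace of `G(λ)` on continuous periodic functions; `c` plays the role of
`(2π)^{-3/2}`. -/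
def bsEigenset (c : ℂ) (ε : (Fin 3 → ℝ) → ℝ) (v : (Fin 3 → ℝ) → ℂ) (lam : ℝ) :
    Set ((Fin 3 → ℝ) → ℂ) :=
  {ψ | Continuous ψ ∧ IsTorusPeriodic ψ ∧
    ∀ p, c * ∫ q in cube3, v (p - q) * (((ε q - lam)⁻¹ : ℝ) : ℂ) * ψ q = -ψ p}

/-- The `λ`-eigenspace of `h` in `L²([-π,π]³)`. -/
def hEigenset (c : ℂ) (ε : (Fin 3 → ℝ) → ℝ) (v : (Fin 3 → ℝ) → ℂ) (lam : ℝ) :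
    Set ((Fin 3 → ℝ) → ℂ) :=
  {f | MemLp f 2 μ3 ∧
    ∀ᵐ p ∂μ3, (ε p : ℂ) * f p + c * ∫ q in cube3, v (p - q) * f q = (lam : ℂ) * f p}

def divGap (ε : (Fin 3 → ℝ) → ℝ) (lam : ℝ) (ψ : (Fin 3 → ℝ) → ℂ) : (Fin 3 → ℝ) → ℂ :=
  fun p => ψ p / ((ε p - lam : ℝ) : ℂ)

variable {c : ℂ} {ε : (Fin 3 → ℝ) → ℝ} {v : (Fin 3 → ℝ) → ℂ} {lam : ℝ}
  {ψ : (Fin 3 → ℝ) → ℂ}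

lemma gap_ne_zero (hgap : ∀ p, lam < ε p) (p : Fin 3 → ℝ) : ((ε p - lam : ℝ) : ℂ) ≠ 0 :=
  Complex.ofReal_ne_zero.2 (sub_pos.2 (hgap p)).ne'

lemma divGap_injective (hgap : ∀ p, lam < ε p) : Function.Injective (divGap ε lam) :=
  fun _ _ h => funext fun p => (div_left_inj' (gap_ne_zero hgap p)).1 (congrFun h p)

lemma divGap_smul_add_smul (a b : ℂ) (ψ₁ ψ₂ : (Fin 3 → ℝ) → ℂ) :
    divGap ε lam (a • ψ₁ + b • ψ₂) = a • divGap ε lam ψ₁ + b • divGap ε lam ψ₂ := by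
  ext p
  simp only [divGap, Pi.add_apply, Pi.smul_apply, smul_eq_mul, add_div, mul_div_assoc]

lemma divGap_mem_hEigenset (hε : Continuous ε) (hgap : ∀ p, lam < ε p)
    (hψ : ψ ∈ bsEigenset c ε v lam) : divGap ε lam ψ ∈ hEigenset c ε v lam := by
  obtain ⟨hψc, -, hψeq⟩ := hψ
  have hcont : Continuous (divGap ε lam ψ) :=
    hψc.div (by fun_prop) (gap_ne_zero hgap)
  refine ⟨memLp_μ3_of_continuous hcont 2, ae_of_all _ fun p => ?_⟩
  have hK : (fun q => v (p - q) * divGap ε lam ψ q) =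
      fun q => v (p - q) * (((ε q - lam)⁻¹ : ℝ) : ℂ) * ψ q := by
    ext q; simp only [divGap, Complex.ofReal_inv]; ring
  have hne := gap_ne_zero hgap p
  rw [hK, hψeq p, divGap]
  field_simp
  push_cast
  ring

lemma smul_add_smul_mem_bsEigenset (hε : Continuous ε) (hgap : ∀ p, lam < ε p)
    (hv : Continuous v) {ψ₁ ψ₂ : (Fin 3 → ℝ) → ℂ} (h₁ : ψ₁ ∈ bsEigenset c ε v lam)
    (h₂ : ψ₂ ∈ bsEigenset c ε v lam) (a b : ℂ) : a • ψ₁ + b • ψ₂ ∈ bsEigenset c ε v lam := by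
  obtain ⟨h₁c, h₁per, h₁eq⟩ := h₁
  obtain ⟨h₂c, h₂per, h₂eq⟩ := h₂
  refine ⟨by fun_prop,
    fun p s => by simp only [Pi.add_apply, Pi.smul_apply, h₁per p s, h₂per p s], fun p => ?_⟩
  have hw : Continuous fun q => (((ε q - lam)⁻¹ : ℝ) : ℂ) :=
    Complex.continuous_ofReal.comp
      ((hε.sub continuous_const).inv₀ fun q => (sub_pos.2 (hgap q)).ne')
  have hint : ∀ φ : (Fin 3 → ℝ) → ℂ, Continuous φ →
      IntegrableOn (fun q => v (p - q) * (((ε q - lam)⁻¹ : ℝ) : ℂ) * φ q) cube3 := fun φ hφ =>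
    ContinuousOn.integrableOn_compact isCompact_Icc (by fun_prop)
  have hsplit : (fun q => v (p - q) * (((ε q - lam)⁻¹ : ℝ) : ℂ) * (a • ψ₁ + b • ψ₂) q) =
      fun q => a * (v (p - q) * (((ε q - lam)⁻¹ : ℝ) : ℂ) * ψ₁ q) +
        b * (v (p - q) * (((ε q - lam)⁻¹ : ℝ) : ℂ) * ψ₂ q) := by
    ext q; simp only [Pi.add_apply, Pi.smul_apply, smul_eq_mul]; ring
  rw [hsplit, integral_add ((hint ψ₁ h₁c).const_mul a) ((hint ψ₂ h₂c).const_mul b),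
    integral_const_mul, integral_const_mul]
  simp only [Pi.add_apply, Pi.smul_apply, smul_eq_mul]
  linear_combination a * h₁eq p + b * h₂eq p

lemma exists_mem_bsEigenset_divGap_ae_eq (hgap : ∀ p, lam < ε p) (hvc : Continuous v)
    (hvper : IsTorusPeriodic v) {f : (Fin 3 → ℝ) → ℂ} (hf : f ∈ hEigenset c ε v lam) :
    ∃ ψ ∈ bsEigenset c ε v lam, divGap ε lam ψ =ᵐ[μ3] f := by
  obtain ⟨hf2, hfeq⟩ := hf
  set ψ : (Fin 3 → ℝ) → ℂ := fun p => -(c * ∫ q in cube3, v (p - q) * f q) with hψ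
  have hψf : divGap ε lam ψ =ᵐ[μ3] f := by
    filter_upwards [hfeq] with p hp
    rw [divGap, div_eq_iff (gap_ne_zero hgap p), hψ]
    push_cast
    linear_combination -hp
  refine ⟨ψ, ⟨?_, ?_, fun p => ?_⟩, hψf⟩
  · exact ((continuous_integral_comp_sub_mul hvc (hvper.bddAbove_range_norm hvc)
      (hf2.integrable one_le_two)).const_mul c).neg
  · intro p s
    simp only [hψ, hvper.integral_comp_sub_mul f p s]
  · have hK : (∫ q in cube3, v (p - q) * (((ε q - lam)⁻¹ : ℝ) : ℂ) * ψ q) =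
        ∫ q in cube3, v (p - q) * f q := by
      refine integral_congr_ae (hψf.mono fun q hq => ?_)
      dsimp only
      rw [← hq, divGap, Complex.ofReal_inv, div_eq_mul_inv]
      ring
    rw [hK, hψ, neg_neg]

lemma eq_zero_of_divGap_ae_eq_zero (hgap : ∀ p, lam < ε p) (hψ : ψ ∈ bsEigenset c ε v lam)
    (h : divGap ε lam ψ =ᵐ[μ3] 0) : ψ = 0 :=
  hψ.2.1.eq_of_ae_eq (fun _ _ => rfl) hψ.1 continuous_const <|
    h.mono fun p hp => (div_eq_zero_iff.1 hp).resolve_right (gap_ne_zero hgap p)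

end BirmanSchwinger

theorem birmanSchwinger_bijection_general
    (ε : (Fin 3 → ℝ) → ℝ)
    (hεcont : Continuous ε)
    (hεper : ∀ (p : Fin 3 → ℝ) (s : Fin 3 → ℤ),
      ε (fun i => p i + 2 * π * (s i : ℝ)) = ε p)
    (v : (Fin 3 → ℝ) → ℂ)
    (hvcont : Continuous v)
    (hvper : ∀ (p : Fin 3 → ℝ) (s : Fin 3 → ℤ),
      v (fun i => p i + 2 * π * (s i : ℝ)) = v p)
    (lam : ℝ) (hlam : ∀ p ∈ cube3, lam < ε p) :
    -- the `(-1)`-eigenspace of the Birman–Schwinger operator `G(λ)`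
    ∀ A B : Set ((Fin 3 → ℝ) → ℂ),
      A = {ψ | Continuous ψ ∧
        (∀ (p : Fin 3 → ℝ) (s : Fin 3 → ℤ),
          ψ (fun i => p i + 2 * π * (s i : ℝ)) = ψ p) ∧
        ∀ p : Fin 3 → ℝ,
          (((2 * π) ^ (-(3 : ℝ) / 2) : ℝ) : ℂ) *
            ∫ q in cube3, v (p - q) * (((ε q - lam)⁻¹ : ℝ) : ℂ) * ψ q = -ψ p} →
      B = {f | MemLp f 2 μ3 ∧
        ∀ᵐ p ∂μ3,
          (ε p : ℂ) * f p +
            (((2 * π) ^ (-(3 : ℝ) / 2) : ℝ) : ℂ) *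
              ∫ q in cube3, v (p - q) * f q = (lam : ℂ) * f p} →
      -- `Φ ψ = ψ/(ε - λ)` maps `A` into `B`, is injective, linear, and onto `B`
      -- up to almost-everywhere equality
      ((∀ ψ ∈ A, (fun p => ψ p / ((ε p - lam : ℝ) : ℂ)) ∈ B) ∧
       (∀ ψ₁ ∈ A, ∀ ψ₂ ∈ A,
          (fun p => ψ₁ p / ((ε p - lam : ℝ) : ℂ)) =
            (fun p => ψ₂ p / ((ε p - lam : ℝ) : ℂ)) → ψ₁ = ψ₂) ∧
       (∀ ψ₁ ∈ A, ∀ ψ₂ ∈ A, ∀ a b : ℂ,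
          (a • ψ₁ + b • ψ₂ ∈ A) ∧
          (fun p => (a • ψ₁ + b • ψ₂) p / ((ε p - lam : ℝ) : ℂ)) =
            a • (fun p => ψ₁ p / ((ε p - lam : ℝ) : ℂ)) +
              b • (fun p => ψ₂ p / ((ε p - lam : ℝ) : ℂ))) ∧
       (∀ f ∈ B, ∃ ψ ∈ A,
          (fun p => ψ p / ((ε p - lam : ℝ) : ℂ)) =ᵐ[μ3] f) ∧
       -- in particular: `λ` is an eigenvalue of `h` iff `-1` is an eigenvalue
       -- of `G(λ)`
       ((∃ f ∈ B, ¬ (f =ᵐ[μ3] 0)) ↔ (∃ ψ ∈ A, ψ ≠ 0))) := by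
  rintro A B rfl rfl
  generalize (((2 * π) ^ (-(3 : ℝ) / 2) : ℝ) : ℂ) = c
  have hgap : ∀ p, lam < ε p :=
    IsTorusPeriodic.forall_of_forall_mem_cube3 (f := ε) hεper (P := (lam < ·)) hlam
  have hsurj := fun f (hf : f ∈ hEigenset c ε v lam) =>
    exists_mem_bsEigenset_divGap_ae_eq hgap hvcont hvper hf
  refine ⟨fun ψ hψ => divGap_mem_hEigenset hεcont hgap hψ,
    fun ψ₁ _ ψ₂ _ h => divGap_injective hgap h,
    fun ψ₁ h₁ ψ₂ h₂ a b =>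
      ⟨smul_add_smul_mem_bsEigenset hεcont hgap hvcont h₁ h₂ a b, divGap_smul_add_smul a b ψ₁ ψ₂⟩,
    hsurj, ⟨?_, ?_⟩⟩
  · rintro ⟨f, hf, hf0⟩
    obtain ⟨ψ, hψ, hψf⟩ := hsurj f hf
    refine ⟨ψ, hψ, fun hψ0 => hf0 (hψf.symm.trans (ae_of_all _ fun p => ?_))⟩
    simp [divGap, hψ0]
  · rintro ⟨ψ, hψ, hψ0⟩
    exact ⟨_, divGap_mem_hEigenset hεcont hgap hψ,
      fun h => hψ0 (eq_zero_of_divGap_ae_eq_zero hgap hψ h)⟩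

/-- Birman–Schwinger principle below the bottom of the essential
spectrum: `ψ ↦ ψ/(ε - λ)` is a linear bijection from the `(-1)`-eigenspace of
`G(λ)` on continuous periodic functions onto the `λ`-eigenspace of `h` in
`L²([-π,π]³)`; in particular `λ` is an eigenvalue of `h` iff `-1` is an
eigenvalue of `G(λ)`. -/
theorem birmanSchwinger_bijection
    (ε : (Fin 3 → ℝ) → ℝ)
    (hεcont : Continuous ε)
    (hεper : ∀ (p : Fin 3 → ℝ) (s : Fin 3 → ℤ),
      ε (fun i => p i + 2 * π * (s i : ℝ)) = ε p)
    (v : (Fin 3 → ℝ) → ℂ)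
    (hvcont : Continuous v)
    (hvper : ∀ (p : Fin 3 → ℝ) (s : Fin 3 → ℤ),
      v (fun i => p i + 2 * π * (s i : ℝ)) = v p)
    (hvsym : ∀ p, v (-p) = (starRingEnd ℂ) (v p))
    (lam : ℝ) (hlam : ∀ p ∈ cube3, lam < ε p) :
    -- the `(-1)`-eigenspace of the Birman–Schwinger operator `G(λ)`
    ∀ A B : Set ((Fin 3 → ℝ) → ℂ),
      A = {ψ | Continuous ψ ∧
        (∀ (p : Fin 3 → ℝ) (s : Fin 3 → ℤ),
          ψ (fun i => p i + 2 * π * (s i : ℝ)) = ψ p) ∧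
        ∀ p : Fin 3 → ℝ,
          (((2 * π) ^ (-(3 : ℝ) / 2) : ℝ) : ℂ) *
            ∫ q in cube3, v (p - q) * (((ε q - lam)⁻¹ : ℝ) : ℂ) * ψ q = -ψ p} →
      B = {f | MemLp f 2 μ3 ∧
        ∀ᵐ p ∂μ3,
          (ε p : ℂ) * f p +
            (((2 * π) ^ (-(3 : ℝ) / 2) : ℝ) : ℂ) *
              ∫ q in cube3, v (p - q) * f q = (lam : ℂ) * f p} →
      -- `Φ ψ = ψ/(ε - λ)` maps `A` into `B`, is injective, linear, and onto `B`
      -- up to almost-everywhere equality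
      ((∀ ψ ∈ A, (fun p => ψ p / ((ε p - lam : ℝ) : ℂ)) ∈ B) ∧
       (∀ ψ₁ ∈ A, ∀ ψ₂ ∈ A,
          (fun p => ψ₁ p / ((ε p - lam : ℝ) : ℂ)) =
            (fun p => ψ₂ p / ((ε p - lam : ℝ) : ℂ)) → ψ₁ = ψ₂) ∧
       (∀ ψ₁ ∈ A, ∀ ψ₂ ∈ A, ∀ a b : ℂ,
          (a • ψ₁ + b • ψ₂ ∈ A) ∧
          (fun p => (a • ψ₁ + b • ψ₂) p / ((ε p - lam : ℝ) : ℂ)) =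
            a • (fun p => ψ₁ p / ((ε p - lam : ℝ) : ℂ)) +
              b • (fun p => ψ₂ p / ((ε p - lam : ℝ) : ℂ))) ∧
       (∀ f ∈ B, ∃ ψ ∈ A,
          (fun p => ψ p / ((ε p - lam : ℝ) : ℂ)) =ᵐ[μ3] f) ∧
       -- in particular: `λ` is an eigenvalue of `h` iff `-1` is an eigenvalue
       -- of `G(λ)`
       ((∃ f ∈ B, ¬ (f =ᵐ[μ3] 0)) ↔ (∃ ψ ∈ A, ψ ≠ 0))) :=
  birmanSchwinger_bijection_general ε hεcont hεper v hvcont hvper lam hlam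
end
end
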